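/- Bruhat decomposition with unipotent representatives: GL_n(F) is the disjoint union over w ∈ S_n of the double cosets N_w w B, where N_w = N ∩ w N^- w^{-1} and B is the Borel subgroup of upper triangular matrices. -/

import Mathlib

open Matrix

variable (K : Type) [Field K]

/-- The permutation matrix of `w`, with `w_{ij} = 1` iff `w(j) = i`. -/
def permMat (n : ℕ) (w : Equiv.Perm (Fin n)) : Matrix (Fin n) (Fin n) K :=
  fun i j => if w j = i then 1 else 0

/-- upper triangular unipotent. -/
def IsUnipUpper {n : ℕ} (m : Matrix (Fin n) (Fin n) K) : Prop :=
  (∀ i : Fin n, m i i = 1) ∧ (∀ i j : Fin n, j < i → m i j = 0)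

/-- lower triangular unipotent. -/
def IsUnipLower {n : ℕ} (m : Matrix (Fin n) (Fin n) K) : Prop :=
  (∀ i : Fin n, m i i = 1) ∧ (∀ i j : Fin n, i < j → m i j = 0)

/-- `N_w = N ∩ w N⁻ w⁻¹`. -/
def Nw (n : ℕ) (w : Equiv.Perm (Fin n)) : Set (Matrix (Fin n) (Fin n) K) :=
  {m | IsUnipUpper K m ∧
    ∃ m' : Matrix (Fin n) (Fin n) K, IsUnipLower K m' ∧
      m = permMat K n w * m' * permMat K n w⁻¹}

/-- invertible upper triangular matrix (an element of the Borel `B`). -/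
def IsBorel {n : ℕ} (b : Matrix (Fin n) (Fin n) K) : Prop :=
  (∀ i j : Fin n, j < i → b i j = 0) ∧ (∀ i : Fin n, b i i ≠ 0)

/-!
Existence is Gaussian elimination, one column at a time. Let `j₀` be the first column and `i₀`
the lowest row with `g i₀ j₀ ≠ 0`. Then `g` is the rank-one matrix `(g · j₀) (g i₀ ·) / g i₀ j₀`
plus the Schur complement of that entry, placed off row `i₀` and column `j₀`. A decomposition
`m' w' b'` of the Schur complement extends by `w j₀ = i₀`, taking `g · j₀ / g i₀ j₀` as column
`i₀` of `m` (upper triangular because `i₀` is the lowest nonzero entry) and `g i₀ ·` as row `j₀`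
of `b`. For the induction, rows and columns are indexed by two finite linear orders `ι` and `κ`,
with `w : κ ≃ ι`.

Uniqueness: from `m₁ w₁ b₁ = m₂ w₂ b₂` we get `m₂⁻¹ m₁ w₁ = w₂ b₂ b₁⁻¹`. Comparing the entries
at `(w₂ j, j)` gives `w₂ j ≤ w₁ j` for every `j`, and a permutation moving no point upwards is
the identity.
-/

namespace Equiv

theorem Perm.eq_one_of_forall_apply_le {α : Type*} [LinearOrder α] [WellFoundedLT α]
    {σ : Perm α} (h : ∀ x, σ x ≤ x) : σ = 1 := by
  ext x
  induction x using WellFoundedLT.induction with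
  | _ x ih =>
    rcases (h x).lt_or_eq with hlt | heq
    · exact absurd (σ.injective (ih _ hlt)) hlt.ne
    · exact heq

variable {α β : Type*} [DecidableEq α] [DecidableEq β] {a₀ : α} {b₀ : β}

def extendSubtypeNe (e : {a // a ≠ a₀} ≃ {b // b ≠ b₀}) : α ≃ β :=
  (optionSubtypeNe a₀).symm.trans (e.optionCongr.trans (optionSubtypeNe b₀))

@[simp]
theorem extendSubtypeNe_apply_self (e : {a // a ≠ a₀} ≃ {b // b ≠ b₀}) :
    e.extendSubtypeNe a₀ = b₀ := by
  simp [extendSubtypeNe]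

@[simp]
theorem extendSubtypeNe_apply_coe (e : {a // a ≠ a₀} ≃ {b // b ≠ b₀}) (a : {a // a ≠ a₀}) :
    e.extendSubtypeNe a = e a := by
  simp [extendSubtypeNe, optionSubtypeNe_symm_of_ne a.2]

end Equiv

theorem Fintype.card_subtype_ne_add_one {α : Type*} [Fintype α] [DecidableEq α] (a : α) :
    Fintype.card {x // x ≠ a} + 1 = Fintype.card α := by
  simpa using Fintype.card_congr (Equiv.optionSubtypeNe a)

theorem exists_ne_zero_forall_gt_eq_zero {ι R : Type*} [Fintype ι] [LinearOrder ι] [Zero R]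
    {f : ι → R} (hf : f ≠ 0) : ∃ i₀, f i₀ ≠ 0 ∧ ∀ i, i₀ < i → f i = 0 := by
  classical
  obtain ⟨i₀, hi₀, hmax⟩ := (Finset.univ.filter (f · ≠ 0)).exists_max_image id
    (by simpa [Finset.Nonempty, funext_iff] using hf)
  refine ⟨i₀, (Finset.mem_filter.mp hi₀).2, fun i hi => ?_⟩
  by_contra h
  exact (hmax i (Finset.mem_filter.mpr ⟨Finset.mem_univ i, h⟩)).not_gt hi

namespace Matrix

variable {R ι κ : Type*}

section Triangular

variable [LinearOrder ι] [Fintype ι] [Field R] {P Q : Matrix ι ι R}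

theorem IsUpperTriangular.mul_apply_self (hP : P.IsUpperTriangular) (hQ : Q.IsUpperTriangular)
    (i : ι) : (P * Q) i i = P i i * Q i i := by
  rw [mul_apply, Finset.sum_eq_single i]
  · intro k _ hk
    rcases hk.lt_or_gt with hlt | hgt
    · rw [hP hlt, zero_mul]
    · rw [hQ hgt, mul_zero]
  · simp

theorem IsUpperTriangular.isUnit_det (hP : P.IsUpperTriangular) (hd : ∀ i, P i i ≠ 0) :
    IsUnit P.det := by
  rw [det_of_isUpperTriangular hP]
  exact (Finset.prod_ne_zero_iff.mpr fun i _ => hd i).isUnit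

theorem IsUpperTriangular.inv (hP : P.IsUpperTriangular) : P⁻¹.IsUpperTriangular := by
  by_cases h : IsUnit P.det
  · have := P.invertibleOfIsUnitDet h
    exact blockTriangular_inv_of_blockTriangular hP
  · rw [nonsing_inv_apply_not_isUnit _ h]
    exact blockTriangular_zero

theorem IsUpperTriangular.inv_apply_self_ne_zero (hP : P.IsUpperTriangular)
    (hd : ∀ i, P i i ≠ 0) (i : ι) : P⁻¹ i i ≠ 0 := by
  have h := congrFun (congrFun (P.mul_nonsing_inv (hP.isUnit_det hd)) i) i
  rw [hP.mul_apply_self hP.inv, one_apply_eq] at h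
  exact right_ne_zero_of_mul_eq_one h

end Triangular

theorem IsUpperTriangular.apply_le_of_submatrix_eq [LinearOrder ι] [LinearOrder κ] [Zero R]
    {w₁ w₂ : κ ≃ ι} {u : Matrix ι ι R} {c : Matrix κ κ R} (hu : u.IsUpperTriangular)
    (hc : ∀ j, c j j ≠ 0) (h : u.submatrix id w₁ = c.submatrix w₂.symm id) (j : κ) :
    w₂ j ≤ w₁ j := by
  by_contra! hlt
  have hj := congrFun (congrFun h (w₂ j)) j
  simp only [submatrix_apply, id, Equiv.symm_apply_apply] at hj
  exact hc j (hj ▸ hu hlt)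

section Border

variable [DecidableEq ι] [DecidableEq κ] {i₀ : ι} {j₀ : κ} (r : κ → R) (c : ι → R)
  (M : Matrix {i // i ≠ i₀} {j // j ≠ j₀} R)

def border : Matrix ι κ R :=
  of fun i j => if hi : i = i₀ then r j else if hj : j = j₀ then c i else M ⟨i, hi⟩ ⟨j, hj⟩

@[simp]
theorem border_apply_row (j : κ) : border r c M i₀ j = r j := by
  simp [border]

@[simp]
theorem border_apply_col {i : ι} (hi : i ≠ i₀) : border r c M i j₀ = c i := by
  simp [border, hi]

theorem border_apply_of_ne {i : ι} {j : κ} (hi : i ≠ i₀) (hj : j ≠ j₀) :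
    border r c M i j = M ⟨i, hi⟩ ⟨j, hj⟩ := by
  simp [border, hi, hj]

end Border

theorem isUpperTriangular_border [LinearOrder ι] [Zero R] {i₀ : ι} {r c : ι → R}
    {M : Matrix {i // i ≠ i₀} {i // i ≠ i₀} R} (hr : ∀ i < i₀, r i = 0)
    (hc : ∀ i, i₀ < i → c i = 0) (hM : M.IsUpperTriangular) :
    (border r c M).IsUpperTriangular := by
  intro i i' (h : i' < i)
  by_cases hi : i = i₀
  · subst hi
    rw [border_apply_row, hr _ h]
  by_cases hi' : i' = i₀
  · subst hi'
    rw [border_apply_col _ _ _ hi, hc _ h]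
  rw [border_apply_of_ne _ _ _ hi hi']
  exact hM (show (⟨i', hi'⟩ : {i // i ≠ i₀}) < ⟨i, hi⟩ from h)

variable [Field R] [Fintype κ] [DecidableEq κ]

def schurCompl (g : Matrix ι κ R) (i₀ : ι) (j₀ : κ) : Matrix {i // i ≠ i₀} {j // j ≠ j₀} R :=
  of fun i j => g i j - g i j₀ * g i₀ j / g i₀ j₀

theorem injective_mulVec_schurCompl {g : Matrix ι κ R} {i₀ : ι} {j₀ : κ} (ha : g i₀ j₀ ≠ 0)
    (hg : Function.Injective g.mulVec) : Function.Injective (schurCompl g i₀ j₀).mulVec := by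
  rw [← coe_mulVecLin, injective_iff_map_eq_zero]
  intro v hv
  rw [mulVecLin_apply] at hv
  -- Extend `v` by the value at `j₀` that makes row `i₀` of `g` vanish on it.
  set s := ∑ j : {j // j ≠ j₀}, g i₀ j * v j
  set x : κ → R := fun j => if hj : j = j₀ then -s / g i₀ j₀ else v ⟨j, hj⟩
  have hxv : ∀ j : {j // j ≠ j₀}, x j = v j := fun j => dif_neg j.2
  have hx₀ : x j₀ = -s / g i₀ j₀ := dif_pos rfl
  have hgx : ∀ i, (g *ᵥ x) i = g i j₀ * (-s / g i₀ j₀) + ∑ j : {j // j ≠ j₀}, g i j * v j := by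
    intro i
    simp only [mulVec, dotProduct, Fintype.sum_eq_add_sum_subtype_ne _ j₀, hxv, hx₀]
  have hx : g *ᵥ x = 0 := by
    ext i
    rw [hgx]
    by_cases hi : i = i₀
    · subst hi
      rw [mul_div_cancel₀ _ ha, neg_add_cancel, Pi.zero_apply]
    · have hvi := congrFun hv ⟨i, hi⟩
      simp only [mulVec, dotProduct, schurCompl, of_apply, sub_mul, Finset.sum_sub_distrib,
        Pi.zero_apply, sub_eq_zero] at hvi
      have hs : ∑ j : {j // j ≠ j₀}, g i j₀ * g i₀ j / g i₀ j₀ * v j = g i j₀ / g i₀ j₀ * s := by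
        rw [Finset.mul_sum]
        exact Finset.sum_congr rfl fun j _ => by ring
      rw [hvi, hs, Pi.zero_apply]
      ring
  ext j
  simpa [hxv] using congrFun (hg (hx.trans (mulVec_zero g).symm)) j

end Matrix

section

open Matrix

variable {F ι κ : Type*} [Field F] [Fintype κ] [LinearOrder ι] [LinearOrder κ]

/-- `m.submatrix id w` is `m` times the permutation matrix of `w`, and the condition on
`m.submatrix w w` says that `w⁻¹ m w` is lower triangular, i.e. `m ∈ N ∩ w N⁻ w⁻¹`. -/
structure BruhatDecomposition (g : Matrix ι κ F) where
  w : κ ≃ ι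
  m : Matrix ι ι F
  b : Matrix κ κ F
  isUpperTriangular_m : m.IsUpperTriangular
  m_apply_self : ∀ i, m i i = 1
  isLowerTriangular_submatrix_m : (m.submatrix w w).IsLowerTriangular
  isUpperTriangular_b : b.IsUpperTriangular
  b_apply_self_ne_zero : ∀ j, b j j ≠ 0
  eq_submatrix_mul : g = m.submatrix id w * b

namespace BruhatDecomposition

def ofSchurCompl {g : Matrix ι κ F} {i₀ : ι} {j₀ : κ} (hj₀ : ∀ j, j₀ ≤ j)
    (ha : g i₀ j₀ ≠ 0) (hi₀ : ∀ i, i₀ < i → g i j₀ = 0)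
    (d : BruhatDecomposition (schurCompl g i₀ j₀)) : BruhatDecomposition g where
  w := d.w.extendSubtypeNe
  m := border (Pi.single i₀ 1) (fun i => g i j₀ / g i₀ j₀) d.m
  b := border (g i₀) 0 d.b
  isUpperTriangular_m := isUpperTriangular_border (fun i hi => Pi.single_eq_of_ne hi.ne _)
    (fun i hi => by rw [hi₀ i hi, zero_div]) d.isUpperTriangular_m
  m_apply_self i := by
    by_cases hi : i = i₀
    · subst hi
      simp
    · rw [border_apply_of_ne _ _ _ hi hi, d.m_apply_self]
  isLowerTriangular_submatrix_m := by
    intro j j' (h : j < j')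
    have hj' : j' ≠ j₀ := (lt_of_le_of_lt (hj₀ j) h).ne'
    have hwj' : d.w.extendSubtypeNe j' = d.w ⟨j', hj'⟩ := d.w.extendSubtypeNe_apply_coe ⟨j', hj'⟩
    rw [submatrix_apply, hwj']
    by_cases hj : j = j₀
    · subst hj
      rw [Equiv.extendSubtypeNe_apply_self, border_apply_row]
      exact Pi.single_eq_of_ne (d.w _).2 _
    · have hwj : d.w.extendSubtypeNe j = d.w ⟨j, hj⟩ := d.w.extendSubtypeNe_apply_coe ⟨j, hj⟩
      rw [hwj, border_apply_of_ne _ _ _ (d.w _).2 (d.w _).2]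
      exact d.isLowerTriangular_submatrix_m
        (show OrderDual.toDual (⟨j', hj'⟩ : {j // j ≠ j₀}) < OrderDual.toDual ⟨j, hj⟩ from h)
  isUpperTriangular_b := isUpperTriangular_border (fun j hj => absurd (hj₀ j) hj.not_ge)
    (fun _ _ => rfl) d.isUpperTriangular_b
  b_apply_self_ne_zero j := by
    by_cases hj : j = j₀
    · subst hj
      simpa using ha
    · rw [border_apply_of_ne _ _ _ hj hj]
      exact d.b_apply_self_ne_zero _
  eq_submatrix_mul := by
    refine Matrix.ext fun i j => ?_
    rw [mul_apply, Fintype.sum_eq_add_sum_subtype_ne _ j₀]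
    simp only [submatrix_apply, id, Equiv.extendSubtypeNe_apply_self,
      Equiv.extendSubtypeNe_apply_coe, border_apply_row]
    by_cases hi : i = i₀
    · subst hi
      simp [Pi.single_eq_of_ne (d.w _).2]
    rw [border_apply_col _ _ _ hi]
    by_cases hj : j = j₀
    · subst hj
      rw [Finset.sum_eq_zero fun k _ => by rw [border_apply_col _ _ _ k.2, Pi.zero_apply, mul_zero],
        add_zero, div_mul_cancel₀ _ ha]
    · have hschur := congrFun (congrFun d.eq_submatrix_mul ⟨i, hi⟩) ⟨j, hj⟩
      simp only [schurCompl, of_apply, mul_apply, submatrix_apply, id] at hschur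
      rw [Finset.sum_congr rfl fun k _ => by
        rw [border_apply_of_ne _ _ _ hi (d.w k).2, border_apply_of_ne _ _ _ k.2 hj], ← hschur]
      ring

theorem nonempty [Fintype ι] (g : Matrix ι κ F) (hcard : Fintype.card ι = Fintype.card κ)
    (hg : Function.Injective g.mulVec) : Nonempty (BruhatDecomposition g) := by
  obtain ⟨n, hn⟩ : ∃ n, Fintype.card κ = n := ⟨_, rfl⟩
  induction n generalizing ι κ with
  | zero =>
    have := Fintype.card_eq_zero_iff.mp hn
    have := Fintype.card_eq_zero_iff.mp (hcard.trans hn)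
    exact ⟨⟨Equiv.equivOfIsEmpty κ ι, 1, 1, fun i => isEmptyElim i, isEmptyElim,
      fun i => isEmptyElim i, fun i => isEmptyElim i, isEmptyElim, Matrix.ext isEmptyElim⟩⟩
  | succ n ih =>
    have : Nonempty κ := Fintype.card_pos_iff.mp (by omega)
    set j₀ : κ := Finset.univ.min' Finset.univ_nonempty
    have hj₀ : ∀ j, j₀ ≤ j := fun j => Finset.min'_le _ _ (Finset.mem_univ j)
    have hcol : (fun i => g i j₀) ≠ 0 := fun h => by
      have := hg (a₁ := Pi.single j₀ 1) (a₂ := 0) (by rw [mulVec_single_one, mulVec_zero]; exact h)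
      simpa using congrFun this j₀
    obtain ⟨i₀, ha, hbelow⟩ := exists_ne_zero_forall_gt_eq_zero hcol
    have hι := Fintype.card_subtype_ne_add_one i₀
    have hκ := Fintype.card_subtype_ne_add_one j₀
    obtain ⟨d⟩ := ih (schurCompl g i₀ j₀) (by omega) (injective_mulVec_schurCompl ha hg) (by omega)
    exact ⟨ofSchurCompl hj₀ ha hbelow d⟩

end BruhatDecomposition

theorem perm_eq_of_submatrix_mul_eq [Fintype ι] {w₁ w₂ : κ ≃ ι} {m₁ m₂ : Matrix ι ι F}
    {b₁ b₂ : Matrix κ κ F} (hm₁ : m₁.IsUpperTriangular) (hm₂ : m₂.IsUpperTriangular)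
    (hm₂d : ∀ i, m₂ i i ≠ 0) (hb₁ : b₁.IsUpperTriangular) (hb₁d : ∀ j, b₁ j j ≠ 0)
    (hb₂ : b₂.IsUpperTriangular) (hb₂d : ∀ j, b₂ j j ≠ 0)
    (h : m₁.submatrix id w₁ * b₁ = m₂.submatrix id w₂ * b₂) : w₁ = w₂ := by
  have := m₂.invertibleOfIsUnitDet (hm₂.isUnit_det hm₂d)
  have := b₁.invertibleOfIsUnitDet (hb₁.isUnit_det hb₁d)
  have hsub (M : Matrix ι ι F) (w : κ ≃ ι) :
      M.submatrix id w = M * (w.symm.toPEquiv.toMatrix : Matrix ι κ F) := by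
    rw [PEquiv.mul_toMatrix_toPEquiv, Equiv.symm_symm]
  have hconj : (m₂⁻¹ * m₁).submatrix id w₁ = (b₂ * b₁⁻¹).submatrix w₂.symm id := by
    rw [← PEquiv.toMatrix_toPEquiv_mul, hsub]
    rw [hsub, hsub] at h
    have h' := congrArg (fun X : Matrix ι κ F => m₂⁻¹ * X * b₁⁻¹) h
    simp only [Matrix.mul_assoc, mul_inv_of_invertible, Matrix.mul_one,
      inv_mul_cancel_left_of_invertible] at h'
    rw [Matrix.mul_assoc, h']
  have hdiag (j : κ) : (b₂ * b₁⁻¹) j j ≠ 0 := by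
    rw [hb₂.mul_apply_self hb₁.inv]
    exact mul_ne_zero (hb₂d j) (hb₁.inv_apply_self_ne_zero hb₁d j)
  have hle := IsUpperTriangular.apply_le_of_submatrix_eq (hm₂.inv.mul hm₁) hdiag hconj
  have hσ : w₁.symm.trans w₂ = Equiv.refl ι :=
    Equiv.Perm.eq_one_of_forall_apply_le fun i => by simpa using hle (w₁.symm i)
  ext j
  simpa using congrArg (· (w₁ j)) hσ.symm

end

section

variable {K}

theorem permMat_eq_toMatrix {n : ℕ} (w : Equiv.Perm (Fin n)) :
    permMat K n w = w.symm.toPEquiv.toMatrix := by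
  ext i j
  simp [permMat, PEquiv.toMatrix_apply, Equiv.eq_symm_apply, eq_comm]

theorem mul_permMat {n : ℕ} (M : Matrix (Fin n) (Fin n) K) (w : Equiv.Perm (Fin n)) :
    M * permMat K n w = M.submatrix id w := by
  rw [permMat_eq_toMatrix, PEquiv.mul_toMatrix_toPEquiv, Equiv.symm_symm]

theorem permMat_mul {n : ℕ} (M : Matrix (Fin n) (Fin n) K) (w : Equiv.Perm (Fin n)) :
    permMat K n w * M = M.submatrix w.symm id := by
  rw [permMat_eq_toMatrix, PEquiv.toMatrix_toPEquiv_mul]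

theorem mem_Nw_of_isLowerTriangular {n : ℕ} {w : Equiv.Perm (Fin n)}
    {m : Matrix (Fin n) (Fin n) K} (hm : IsUnipUpper K m)
    (hw : (m.submatrix w w).IsLowerTriangular) : m ∈ Nw K n w := by
  refine ⟨hm, m.submatrix w w, ⟨fun i => hm.1 (w i), fun i j h => hw h⟩, ?_⟩
  rw [permMat_mul, mul_permMat]
  ext i j
  simp [Equiv.Perm.inv_def]

end

/-- Bruhat decomposition with unipotent representatives:
`GL_n(K)` is the disjoint union over `w ∈ Sₙ` of the cosets `N_w w B`. -/
theorem stmt7 (n : ℕ) (g : GL (Fin n) K) :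
    ∃! w : Equiv.Perm (Fin n),
      ∃ (m b : Matrix (Fin n) (Fin n) K), m ∈ Nw K n w ∧ IsBorel K b ∧
        (↑g : Matrix (Fin n) (Fin n) K) = m * permMat K n w * b := by
  obtain ⟨d⟩ := BruhatDecomposition.nonempty (g : Matrix (Fin n) (Fin n) K) rfl
    (mulVec_injective_of_isUnit g.isUnit)
  refine ⟨d.w, ⟨d.m, d.b, ?_, ⟨fun i j h => d.isUpperTriangular_b h, d.b_apply_self_ne_zero⟩,
    by rw [mul_permMat]; exact d.eq_submatrix_mul⟩, ?_⟩
  · exact mem_Nw_of_isLowerTriangular ⟨d.m_apply_self, fun i j h => d.isUpperTriangular_m h⟩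
      d.isLowerTriangular_submatrix_m
  rintro w ⟨m, b, hm, hb, hgw⟩
  rw [mul_permMat] at hgw
  exact perm_eq_of_submatrix_mul_eq (fun i j h => hm.1.2 i j h) d.isUpperTriangular_m
    (fun i => by simp [d.m_apply_self]) (fun i j h => hb.1 i j h) hb.2 d.isUpperTriangular_b
    d.b_apply_self_ne_zero (hgw.symm.trans d.eq_submatrix_mul)
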